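/- Let G be an ordered mean with parameterized means G^μ defined by G^μ(ω; A) := (G^{−μ}(ω; A⁻¹))⁻¹ for μ < 0. For positive definite operators A₁,…,Aₙ, probability vector ω, any μ, ν < 0, and t ∈ [0,1]: (1−t)·G^μ(ω; A) + t·G^ν(ω; A) ≥ G^{(1−t)μ + tν}(ω; A). -/

import Mathlib

/-! For `μ < 0`, `G^μ(ω; A)` is the inverse of `Φ(-μ)`, where `Φ(s) = G(ω; A⁻¹ + s) - s`.
Joint concavity of `G` makes `Φ` concave in `s`, and the superadditivity
`G(ω; B + s) ≥ G(ω; B) + s` (concavity at `1/2` plus homogeneity) keeps `Φ` strictly positive.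
Since the operator inverse is convex and order-reversing on strictly positive operators, the
inverse of a strictly positive concave function is convex. -/

open ContinuousLinearMap in
/-- A positive definite (positive invertible) bounded operator on a Hilbert space. -/
def IsPosDef {H : Type*} [NormedAddCommGroup H] [InnerProductSpace ℂ H] [CompleteSpace H]
    (A : H →L[ℂ] H) : Prop := A.IsPositive ∧ IsUnit A

/-- A positive probability vector. -/
def IsProbVec {n : ℕ} (w : Fin n → ℝ) : Prop := (∀ i, 0 < w i) ∧ ∑ i, w i = 1

/-- An ordered mean: a family of weighted means of positive definite operators satisfying
homogeneity, monotonicity, joint concavity and the arithmetic-`G`-harmonic mean inequalities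
with respect to the Loewner order. -/
structure OrderedMean (H : Type*) [NormedAddCommGroup H] [InnerProductSpace ℂ H]
    [CompleteSpace H] where
  G : ∀ n : ℕ, (Fin n → ℝ) → (Fin n → (H →L[ℂ] H)) → (H →L[ℂ] H)
  posDef : ∀ n w A, IsProbVec w → (∀ i, IsPosDef (A i)) → IsPosDef (G n w A)
  homog : ∀ n w A (a : ℝ), IsProbVec w → (∀ i, IsPosDef (A i)) → 0 < a →
    G n w (fun i => a • A i) = a • G n w A
  mono : ∀ n w A B, IsProbVec w → (∀ i, IsPosDef (A i)) → (∀ i, IsPosDef (B i)) →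
    (∀ i, B i ≤ A i) → G n w B ≤ G n w A
  concave : ∀ n w A B (s : ℝ), IsProbVec w → (∀ i, IsPosDef (A i)) → (∀ i, IsPosDef (B i)) →
    0 ≤ s → s ≤ 1 →
    (1 - s) • G n w A + s • G n w B ≤ G n w (fun i => (1 - s) • A i + s • B i)
  harm_le : ∀ n w A, IsProbVec w → (∀ i, IsPosDef (A i)) →
    Ring.inverse (∑ i, w i • Ring.inverse (A i)) ≤ G n w A
  le_arith : ∀ n w A, IsProbVec w → (∀ i, IsPosDef (A i)) →
    G n w A ≤ ∑ i, w i • A i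

/-- The parameterized ordered mean `G^μ`. -/
noncomputable def OrderedMean.pMean {H : Type*} [NormedAddCommGroup H] [InnerProductSpace ℂ H]
    [CompleteSpace H] (G : OrderedMean H) (μ : ℝ) (n : ℕ) (w : Fin n → ℝ)
    (A : Fin n → (H →L[ℂ] H)) : H →L[ℂ] H :=
  if 0 ≤ μ then G.G n w (fun i => A i + μ • 1) - μ • 1
  else Ring.inverse (G.G n w (fun i => Ring.inverse (A i) + (-μ) • 1) - (-μ) • 1)

/-- The constant `ρ_{M,m}(t)`. -/
noncomputable def rhoConst (M m t : ℝ) : ℝ :=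
  if M / m ≤ t then (1 - t) * m
  else if t ≤ m / M then (1 - t) * M
  else M + m - 2 * Real.sqrt (t * M * m)

variable {H : Type*} [NormedAddCommGroup H] [InnerProductSpace ℂ H] [CompleteSpace H]

open ContinuousLinearMap Set

theorem isPosDef_iff_isStrictlyPositive {A : H →L[ℂ] H} :
    IsPosDef A ↔ IsStrictlyPositive A := by
  rw [IsPosDef, IsStrictlyPositive.iff_of_unital, nonneg_iff_isPositive]

theorem isPosDef_one : IsPosDef (1 : H →L[ℂ] H) :=
  ⟨isPositive_one, isUnit_one⟩

theorem ConcaveOn.convexOn_ringInverse_comp {A : Type*} [CStarAlgebra A] [PartialOrder A]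
    [StarOrderedRing A] {E : Type*} [AddCommMonoid E] [Module ℝ E] {s : Set E} {f : E → A}
    (hf : ConcaveOn ℝ s f) (hpos : ∀ x ∈ s, IsStrictlyPositive (f x)) :
    ConvexOn ℝ s fun x => Ring.inverse (f x) := by
  refine ⟨hf.1, fun x hx y hy a b ha hb hab => ?_⟩
  have hcomb : IsStrictlyPositive (a • f x + b • f y) :=
    CStarAlgebra.convexOn_ringInverse.1 (hpos x hx) (hpos y hy) ha hb hab
  exact (CStarAlgebra.ringInverse_le_ringInverse (hf.2 hx hy ha hb hab) hcomb).trans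
    (CStarAlgebra.convexOn_ringInverse.2 (hpos x hx) (hpos y hy) ha hb hab)

namespace OrderedMean

noncomputable def shiftedMean (G : OrderedMean H) (n : ℕ) (w : Fin n → ℝ)
    (B : Fin n → (H →L[ℂ] H)) (s : ℝ) : H →L[ℂ] H :=
  G.G n w (fun i => B i + s • 1) - s • 1

variable (G : OrderedMean H) {n : ℕ} {w : Fin n → ℝ}

theorem G_one (hw : IsProbVec w) : G.G n w (fun _ => 1) = 1 := by
  refine le_antisymm ?_ ?_
  · simpa [← Finset.sum_smul, hw.2] using G.le_arith n w _ hw fun _ => isPosDef_one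
  · simpa [Ring.inverse_one, ← Finset.sum_smul, hw.2] using
      G.harm_le n w _ hw fun _ => isPosDef_one

theorem G_smul_one (hw : IsProbVec w) {c : ℝ} (hc : 0 < c) :
    G.G n w (fun _ => c • 1) = c • 1 := by
  rw [G.homog n w (fun _ => 1) c hw (fun _ => isPosDef_one) hc, G.G_one hw]

theorem G_add_le_G_add (hw : IsProbVec w) {A B : Fin n → (H →L[ℂ] H)}
    (hA : ∀ i, IsPosDef (A i)) (hB : ∀ i, IsPosDef (B i)) :
    G.G n w A + G.G n w B ≤ G.G n w (fun i => A i + B i) := by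
  have two_smul_posDef : ∀ C : Fin n → (H →L[ℂ] H), (∀ i, IsPosDef (C i)) →
      ∀ i, IsPosDef ((2 : ℝ) • C i) := fun C hC i =>
    isPosDef_iff_isStrictlyPositive.2 ((isPosDef_iff_isStrictlyPositive.1 (hC i)).smul two_pos)
  have h := G.concave n w _ _ (1 / 2) hw (two_smul_posDef A hA) (two_smul_posDef B hB)
    (by norm_num) (by norm_num)
  rw [G.homog n w A 2 hw hA two_pos, G.homog n w B 2 hw hB two_pos] at h
  have hcomb :
      (fun i => (1 - 1 / 2 : ℝ) • (2 : ℝ) • A i + (1 / 2 : ℝ) • (2 : ℝ) • B i) =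
        fun i => A i + B i := by
    funext i; module
  rw [hcomb] at h
  convert h using 1
  module

theorem le_shiftedMean (hw : IsProbVec w) {B : Fin n → (H →L[ℂ] H)}
    (hB : ∀ i, IsPosDef (B i)) {s : ℝ} (hs : 0 < s) : G.G n w B ≤ G.shiftedMean n w B s := by
  have hconst : ∀ _ : Fin n, IsPosDef (s • (1 : H →L[ℂ] H)) := fun _ =>
    isPosDef_iff_isStrictlyPositive.2 (isStrictlyPositive_one.smul hs)
  have h := G.G_add_le_G_add hw hB hconst
  rw [G.G_smul_one hw hs] at h
  exact le_sub_iff_add_le.2 h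

theorem isStrictlyPositive_shiftedMean (hw : IsProbVec w) {B : Fin n → (H →L[ℂ] H)}
    (hB : ∀ i, IsPosDef (B i)) {s : ℝ} (hs : 0 < s) :
    IsStrictlyPositive (G.shiftedMean n w B s) :=
  (isPosDef_iff_isStrictlyPositive.1 (G.posDef n w B hw hB)).of_le (G.le_shiftedMean hw hB hs)

theorem concaveOn_shiftedMean (hw : IsProbVec w) {B : Fin n → (H →L[ℂ] H)}
    (hB : ∀ i, IsPosDef (B i)) : ConcaveOn ℝ (Ioi 0) (G.shiftedMean n w B) := by
  refine ⟨convex_Ioi 0, fun a ha b hb p q hp hq hpq => ?_⟩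
  have hshift : ∀ s : ℝ, 0 < s → ∀ i, IsPosDef (B i + s • 1) := fun s hs i =>
    isPosDef_iff_isStrictlyPositive.2 ((isPosDef_iff_isStrictlyPositive.1 (hB i)).add_nonneg
      (isStrictlyPositive_one.smul hs).nonneg)
  obtain rfl : p = 1 - q := by linarith
  have h := G.concave n w _ _ q hw (hshift a ha) (hshift b hb) hq (by linarith)
  have hcomb : (fun i => (1 - q) • (B i + a • 1) + q • (B i + b • 1)) =
      fun i => B i + ((1 - q) • a + q • b) • (1 : H →L[ℂ] H) := by
    funext i; module
  rw [hcomb] at h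
  unfold shiftedMean
  convert sub_le_sub_right h (((1 - q) • a + q • b) • (1 : H →L[ℂ] H)) using 1
  module

theorem pMean_of_neg (A : Fin n → (H →L[ℂ] H)) {μ : ℝ} (hμ : μ < 0) :
    G.pMean μ n w A = Ring.inverse (G.shiftedMean n w (fun i => Ring.inverse (A i)) (-μ)) :=
  if_neg hμ.not_ge

theorem convexOn_pMean_Iio (hw : IsProbVec w) {A : Fin n → (H →L[ℂ] H)}
    (hA : ∀ i, IsPosDef (A i)) : ConvexOn ℝ (Iio 0) fun μ => G.pMean μ n w A := by
  have hB : ∀ i, IsPosDef (Ring.inverse (A i)) := fun i =>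
    isPosDef_iff_isStrictlyPositive.2 (isPosDef_iff_isStrictlyPositive.1 (hA i)).ringInverse
  have h := (G.concaveOn_shiftedMean hw hB).convexOn_ringInverse_comp
    fun _ hs => G.isStrictlyPositive_shiftedMean hw hB hs
  refine ⟨convex_Iio 0, fun μ hμ ν hν a b ha hb hab => ?_⟩
  have hcomb : a • μ + b • ν < 0 := convex_Iio 0 hμ hν ha hb hab
  dsimp only
  rw [G.pMean_of_neg A hμ, G.pMean_of_neg A hν, G.pMean_of_neg A hcomb,
    show -(a • μ + b • ν) = a • -μ + b • -ν by simp only [smul_eq_mul]; ring]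
  exact h.2 (mem_Ioi.2 (neg_pos.2 hμ)) (mem_Ioi.2 (neg_pos.2 hν)) ha hb hab

end OrderedMean

theorem pMean_param_convex_neg (G : OrderedMean H) {n : ℕ} (w : Fin n → ℝ) (hw : IsProbVec w)
    (A : Fin n → (H →L[ℂ] H)) (hA : ∀ i, IsPosDef (A i))
    (μ ν t : ℝ) (hμ : μ < 0) (hν : ν < 0) (ht0 : 0 ≤ t) (ht1 : t ≤ 1) :
    G.pMean ((1 - t) * μ + t * ν) n w A ≤
      (1 - t) • G.pMean μ n w A + t • G.pMean ν n w A :=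
  (G.convexOn_pMean_Iio hw hA).2 hμ hν (sub_nonneg.2 ht1) ht0 (sub_add_cancel 1 t)
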